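/- arXiv:math/0505423 — 5 statements merged into one kernel-verified Lean document; each statement's English description precedes it below -/
import Mathlib

section
/- Let f : ℝ → ℝ be a twice continuously differentiable function with compact support contained in [0,∞). Then ∫₀^∞ f(x) · x e^(-x²/2) dx = ∫₀^∞ (f(0) + x f'(x) - f''(x)) · x e^(-x²/2) dx. -/
open Real MeasureTheory

theorem rayleigh_functional_equation (f : ℝ → ℝ)
    (hf : ContDiff ℝ 2 f) (hsupp : HasCompactSupport f)
    (hsupp' : tsupport f ⊆ Set.Ici 0) :
    ∫ x in Set.Ioi (0:ℝ), f x * (x * Real.exp (-x ^ 2 / 2)) =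
      ∫ x in Set.Ioi (0:ℝ),
        (f 0 + x * deriv f x - deriv (deriv f) x) * (x * Real.exp (-x ^ 2 / 2)) := by
  -- basic regularity facts
  have hdf : Differentiable ℝ f := hf.differentiable (by norm_num)
  have hcd1 : ContDiff ℝ 1 (deriv f) := by
    have h2 : ContDiff ℝ ((1 : ℕ) + 1) f := by exact_mod_cast hf
    exact (contDiff_succ_iff_deriv.mp h2).2.2
  have hddf : Differentiable ℝ (deriv f) := hcd1.differentiable (by norm_num)
  have hcf : Continuous f := hf.continuous
  have hcf' : Continuous (deriv f) := hcd1.continuous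
  have hcf'' : Continuous (deriv (deriv f)) := hcd1.continuous_deriv le_rfl
  have hcexp : Continuous fun x : ℝ => x * Real.exp (-x ^ 2 / 2) := by fun_prop
  -- vanishing of derivatives outside tsupport f
  have hd1z : ∀ x ∉ tsupport f, deriv f x = 0 := by
    intro x hx
    by_contra h
    exact hx (support_deriv_subset h)
  have hd2z : ∀ x ∉ tsupport f, deriv (deriv f) x = 0 := by
    intro x hx
    by_contra h
    have h1 : x ∈ tsupport (deriv f) := support_deriv_subset h
    exact hx (closure_minimal support_deriv_subset (isClosed_tsupport f) h1)
  have hfz : ∀ x ∉ tsupport f, f x = 0 := by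
    intro x hx
    by_contra h
    exact hx (subset_tsupport f h)
  -- f 0 = 0
  have hzero : ∀ x ≤ (0:ℝ), f x = 0 := by
    intro x hx
    have heq : Set.EqOn f (fun _ => (0:ℝ)) (Set.Iio 0) := by
      intro y hy
      apply hfz
      intro hmem
      exact absurd (hsupp' hmem) (by simpa using (Set.mem_Iio.mp hy).not_ge)
    have := heq.closure hcf continuous_const
    rw [closure_Iio] at this
    exact this hx
  have hf0 : f 0 = 0 := hzero 0 le_rfl
  -- auxiliary function G and its derivative
  set G : ℝ → ℝ := fun x => (f x - x * deriv f x) * Real.exp (-x ^ 2 / 2) with hG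
  have hexp : ∀ x : ℝ, HasDerivAt (fun y : ℝ => Real.exp (-y ^ 2 / 2))
      (-x * Real.exp (-x ^ 2 / 2)) x := by
    intro x
    have h1 : HasDerivAt (fun y : ℝ => -y ^ 2 / 2) (-x) x := by
      have := (hasDerivAt_pow 2 x).neg.div_const 2
      refine this.congr_deriv ?_
      push_cast
      ring
    simpa [mul_comm] using h1.exp
  have hGderiv : ∀ x : ℝ, HasDerivAt G
      ((x * deriv f x - deriv (deriv f) x - f x) * (x * Real.exp (-x ^ 2 / 2))) x := by
    intro x
    have hmul : HasDerivAt (fun y => y * deriv f y)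
        (deriv f x + x * deriv (deriv f) x) x := by
      exact ((hasDerivAt_id' x).mul (hddf.differentiableAt.hasDerivAt)).congr_deriv (by ring)
    have h1 : HasDerivAt (fun y => f y - y * deriv f y)
        (deriv f x - (deriv f x + x * deriv (deriv f) x)) x :=
      (hdf.differentiableAt.hasDerivAt).sub hmul
    have h2 := h1.mul (hexp x)
    refine h2.congr_deriv ?_
    ring
  -- G' is continuous with compact support, hence integrable
  have hG'cont : Continuous fun x : ℝ =>
      (x * deriv f x - deriv (deriv f) x - f x) * (x * Real.exp (-x ^ 2 / 2)) :=
    (((continuous_id.mul hcf').sub hcf'').sub hcf).mul hcexp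
  have hG'supp : HasCompactSupport fun x : ℝ =>
      (x * deriv f x - deriv (deriv f) x - f x) * (x * Real.exp (-x ^ 2 / 2)) := by
    apply HasCompactSupport.intro hsupp
    intro x hx
    simp [hfz x hx, hd1z x hx, hd2z x hx]
  have hG'int : IntegrableOn (fun x : ℝ =>
      (x * deriv f x - deriv (deriv f) x - f x) * (x * Real.exp (-x ^ 2 / 2)))
      (Set.Ioi 0) volume :=
    (hG'cont.integrable_of_hasCompactSupport hG'supp).integrableOn
  -- G tends to 0 at infinity
  have hGsupp : HasCompactSupport G := by
    apply HasCompactSupport.intro hsupp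
    intro x hx
    simp [hG, hfz x hx, hd1z x hx]
  have hGc : Continuous G :=
    (hcf.sub (continuous_id.mul hcf')).mul (by fun_prop)
  have hGtop : Filter.Tendsto G Filter.atTop (nhds 0) := by
    apply (hGsupp.is_zero_at_infty).mono_left
    exact _root_.atTop_le_cocompact
  -- FTC on (0, ∞)
  have hkey : ∫ x in Set.Ioi (0:ℝ),
      (x * deriv f x - deriv (deriv f) x - f x) * (x * Real.exp (-x ^ 2 / 2)) = 0 := by
    have := integral_Ioi_of_hasDerivAt_of_tendsto hGc.continuousWithinAt
      (fun x _ => hGderiv x) hG'int hGtop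
    rw [this, hG]
    simp [hf0]
  -- integrability of the two integrands
  have hAint : IntegrableOn (fun x : ℝ => f x * (x * Real.exp (-x ^ 2 / 2)))
      (Set.Ioi 0) volume := by
    apply Integrable.integrableOn
    exact (hcf.mul hcexp).integrable_of_hasCompactSupport hsupp.mul_right
  have hBint : IntegrableOn (fun x : ℝ =>
      (x * deriv f x - deriv (deriv f) x) * (x * Real.exp (-x ^ 2 / 2)))
      (Set.Ioi 0) volume := by
    apply Integrable.integrableOn
    apply Continuous.integrable_of_hasCompactSupport
      (((continuous_id.mul hcf').sub hcf'').mul hcexp)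
    apply HasCompactSupport.intro hsupp
    intro x hx
    simp [hd1z x hx, hd2z x hx]
  -- conclude
  have hsplit : ∀ x : ℝ,
      (x * deriv f x - deriv (deriv f) x - f x) * (x * Real.exp (-x ^ 2 / 2)) =
      (x * deriv f x - deriv (deriv f) x) * (x * Real.exp (-x ^ 2 / 2)) -
        f x * (x * Real.exp (-x ^ 2 / 2)) := fun x => by ring
  simp_rw [hsplit] at hkey
  rw [integral_sub hBint hAint] at hkey
  simp only [hf0, zero_add]
  linarith
end

section
/- Let f : ℝ → ℝ be twice continuously differentiable with compact support contained in [0,∞), and let κ ≥ 0. Then ∫₀^∞ f(κx) · x e^(-x²/2) dx = ∫₀^∞ (f(0) + κx f'(κx) - κ² f''(κx)) · x e^(-x²/2) dx. -/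
open Real MeasureTheory Filter

theorem rayleigh_functional_equation_scaled (f : ℝ → ℝ)
    (hf : ContDiff ℝ 2 f) (hsupp : HasCompactSupport f)
    (hsupp' : tsupport f ⊆ Set.Ici 0) (κ : ℝ) (hκ : 0 ≤ κ) :
    ∫ x in Set.Ioi (0:ℝ), f (κ * x) * (x * Real.exp (-x ^ 2 / 2)) =
      ∫ x in Set.Ioi (0:ℝ),
        (f 0 + κ * x * deriv f (κ * x) - κ ^ 2 * deriv (deriv f) (κ * x)) *
          (x * Real.exp (-x ^ 2 / 2)) := by
  rcases hκ.eq_or_lt with h0 | hκpos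
  · simp [← h0]
  -- basic regularity facts
  have hf1 : Differentiable ℝ f := hf.differentiable (by norm_num)
  have hfd : ContDiff ℝ 1 (deriv f) := by
    have : ContDiff ℝ (1 + 1 : ℕ) f := by norm_num; exact hf
    exact (contDiff_succ_iff_deriv.mp this).2.2
  have hfd1 : Differentiable ℝ (deriv f) := hfd.differentiable (by norm_num)
  have hcd : Continuous (deriv f) := hfd.continuous
  have hcdd : Continuous (deriv (deriv f)) := (contDiff_one_iff_deriv.mp hfd).2
  -- derivative of the Gaussian factor
  have hexp : ∀ x : ℝ, HasDerivAt (fun y : ℝ => Real.exp (-y ^ 2 / 2))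
      (-x * Real.exp (-x ^ 2 / 2)) x := by
    intro x
    have h : HasDerivAt (fun y : ℝ => -y ^ 2 / 2) (-x) x := by
      have := ((hasDerivAt_pow 2 x).neg).div_const 2
      refine this.congr_deriv ?_
      simp; ring
    have := h.exp
    convert this using 1
    ring
  have hcexp : Continuous fun x : ℝ => Real.exp (-x ^ 2 / 2) := by
    fun_prop
  -- derivatives of compositions
  have hg : ∀ x : ℝ, HasDerivAt (fun y : ℝ => f (κ * y)) (κ * deriv f (κ * x)) x := by
    intro x
    have := (hf1 (κ * x)).hasDerivAt.comp x ((hasDerivAt_id x).const_mul κ)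
    refine this.congr_deriv ?_
    ring
  have hg' : ∀ x : ℝ, HasDerivAt (fun y : ℝ => deriv f (κ * y))
      (κ * deriv (deriv f) (κ * x)) x := by
    intro x
    have := (hfd1 (κ * x)).hasDerivAt.comp x ((hasDerivAt_id x).const_mul κ)
    refine this.congr_deriv ?_
    ring
  -- compact supports
  have hsg : HasCompactSupport fun x : ℝ => f (κ * x) := by
    have := hsupp.comp_smul (c := κ) hκpos.ne'
    simpa [smul_eq_mul] using this
  have hsg' : HasCompactSupport fun x : ℝ => deriv f (κ * x) := by
    have := hsupp.deriv.comp_smul (c := κ) hκpos.ne'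
    simpa [smul_eq_mul] using this
  have hsg'' : HasCompactSupport fun x : ℝ => deriv (deriv f) (κ * x) := by
    have := hsupp.deriv.deriv.comp_smul (c := κ) hκpos.ne'
    simpa [smul_eq_mul] using this
  have hcg : Continuous fun x : ℝ => f (κ * x) := hf.continuous.comp (by fun_prop)
  have hcg' : Continuous fun x : ℝ => deriv f (κ * x) := hcd.comp (by fun_prop)
  have hcg'' : Continuous fun x : ℝ => deriv (deriv f) (κ * x) := hcdd.comp (by fun_prop)
  -- integrability of the pieces
  have int1 : IntegrableOn (fun x : ℝ => f (κ * x) * (x * Real.exp (-x ^ 2 / 2)))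
      (Set.Ioi 0) := by
    exact ((hcg.mul (by fun_prop)).integrable_of_hasCompactSupport
      (hsg.mul_right)).integrableOn
  have int2 : IntegrableOn (fun x : ℝ => deriv f (κ * x) * Real.exp (-x ^ 2 / 2))
      (Set.Ioi 0) := by
    exact ((hcg'.mul hcexp).integrable_of_hasCompactSupport
      (hsg'.mul_right)).integrableOn
  have int3 : IntegrableOn (fun x : ℝ => deriv f (κ * x) * (x ^ 2 * Real.exp (-x ^ 2 / 2)))
      (Set.Ioi 0) := by
    exact ((hcg'.mul (by fun_prop)).integrable_of_hasCompactSupport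
      (hsg'.mul_right)).integrableOn
  have int4 : IntegrableOn (fun x : ℝ => deriv (deriv f) (κ * x) * (x * Real.exp (-x ^ 2 / 2)))
      (Set.Ioi 0) := by
    exact ((hcg''.mul (by fun_prop)).integrable_of_hasCompactSupport
      (hsg''.mul_right)).integrableOn
  have int5 : IntegrableOn (fun x : ℝ => x * Real.exp (-x ^ 2 / 2)) (Set.Ioi 0) := by
    have h : (fun x : ℝ => x * Real.exp (-x ^ 2 / 2))
        = fun x : ℝ => x * Real.exp (-(1/2) * x ^ 2) := by
      funext x; ring_nf
    rw [h]
    exact (integrable_mul_exp_neg_mul_sq (by norm_num)).integrableOn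
  -- eventually-zero at infinity
  have hev : ∀ (h : ℝ → ℝ), HasCompactSupport h →
      ∀ (u : ℝ → ℝ), (∀ᶠ x in atTop, h x = 0 → u x = 0) →
        True := fun _ _ _ _ => trivial
  -- key integral identities
  have key0 : ∫ x in Set.Ioi (0:ℝ),
      (f (κ * x) * (x * Real.exp (-x ^ 2 / 2))
        - κ * (deriv f (κ * x) * Real.exp (-x ^ 2 / 2))) = f 0 := by
    have hder : ∀ x ∈ Set.Ioi (0:ℝ),
        HasDerivAt (fun y : ℝ => -(f (κ * y) * Real.exp (-y ^ 2 / 2)))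
          (f (κ * x) * (x * Real.exp (-x ^ 2 / 2))
            - κ * (deriv f (κ * x) * Real.exp (-x ^ 2 / 2))) x := by
      intro x _
      have := ((hg x).mul (hexp x)).neg
      refine this.congr_deriv ?_
      ring
    have hint : IntegrableOn (fun x : ℝ =>
        f (κ * x) * (x * Real.exp (-x ^ 2 / 2))
          - κ * (deriv f (κ * x) * Real.exp (-x ^ 2 / 2))) (Set.Ioi 0) :=
      int1.sub (int2.const_mul κ)
    have hcont : ContinuousWithinAt (fun y : ℝ => -(f (κ * y) * Real.exp (-y ^ 2 / 2)))
        (Set.Ici 0) 0 := ((hcg.mul hcexp).neg).continuousWithinAt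
    have htend : Tendsto (fun y : ℝ => -(f (κ * y) * Real.exp (-y ^ 2 / 2))) atTop (nhds 0) := by
      apply Tendsto.congr' _ tendsto_const_nhds
      have := (hsg.mul_right (f' := fun y : ℝ => Real.exp (-y ^ 2 / 2)))
      obtain ⟨R, hR⟩ := ((Metric.isCompact_iff_isClosed_bounded.mp this).2).subset_ball 0
      filter_upwards [eventually_gt_atTop R] with x hx
      have hxns : x ∉ tsupport fun y : ℝ => f (κ * y) * Real.exp (-y ^ 2 / 2) := by
        intro hmem
        have := hR hmem
        simp [Metric.mem_ball, Real.dist_eq, abs_lt] at this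
        linarith
      have := image_eq_zero_of_notMem_tsupport hxns
      simp [this]
    have := integral_Ioi_of_hasDerivAt_of_tendsto hcont hder hint htend
    simpa using this
  have key1 : ∫ x in Set.Ioi (0:ℝ),
      (κ ^ 2 * (deriv (deriv f) (κ * x) * (x * Real.exp (-x ^ 2 / 2)))
        + κ * (deriv f (κ * x) * Real.exp (-x ^ 2 / 2))
        - κ * (deriv f (κ * x) * (x ^ 2 * Real.exp (-x ^ 2 / 2)))) = 0 := by
    have hder : ∀ x ∈ Set.Ioi (0:ℝ),
        HasDerivAt (fun y : ℝ => κ * deriv f (κ * y) * (y * Real.exp (-y ^ 2 / 2)))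
          (κ ^ 2 * (deriv (deriv f) (κ * x) * (x * Real.exp (-x ^ 2 / 2)))
            + κ * (deriv f (κ * x) * Real.exp (-x ^ 2 / 2))
            - κ * (deriv f (κ * x) * (x ^ 2 * Real.exp (-x ^ 2 / 2)))) x := by
      intro x _
      have hx : HasDerivAt (fun y : ℝ => y * Real.exp (-y ^ 2 / 2))
          (Real.exp (-x ^ 2 / 2) + x * (-x * Real.exp (-x ^ 2 / 2))) x := by
        exact ((hasDerivAt_id x).mul (hexp x)).congr_deriv (by simp)
      have := ((hg' x).const_mul κ).mul hx
      refine this.congr_deriv ?_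
      ring
    have hint : IntegrableOn (fun x : ℝ =>
        κ ^ 2 * (deriv (deriv f) (κ * x) * (x * Real.exp (-x ^ 2 / 2)))
          + κ * (deriv f (κ * x) * Real.exp (-x ^ 2 / 2))
          - κ * (deriv f (κ * x) * (x ^ 2 * Real.exp (-x ^ 2 / 2)))) (Set.Ioi 0) :=
      ((int4.const_mul _).add (int2.const_mul _)).sub (int3.const_mul _)
    have hcont : ContinuousWithinAt
        (fun y : ℝ => κ * deriv f (κ * y) * (y * Real.exp (-y ^ 2 / 2)))
        (Set.Ici 0) 0 := (((continuous_const.mul hcg').mul (by fun_prop))).continuousWithinAt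
    have htend : Tendsto (fun y : ℝ => κ * deriv f (κ * y) * (y * Real.exp (-y ^ 2 / 2)))
        atTop (nhds 0) := by
      apply Tendsto.congr' _ tendsto_const_nhds
      have hcs : HasCompactSupport
          (fun y : ℝ => κ * deriv f (κ * y) * (y * Real.exp (-y ^ 2 / 2))) := by
        have : (fun y : ℝ => κ * deriv f (κ * y) * (y * Real.exp (-y ^ 2 / 2)))
            = (fun y : ℝ => deriv f (κ * y)) * (fun y => κ * (y * Real.exp (-y ^ 2 / 2))) := by
          funext y; simp [Pi.mul_apply]; ring
        rw [this]
        exact hsg'.mul_right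
      obtain ⟨R, hR⟩ := ((Metric.isCompact_iff_isClosed_bounded.mp hcs).2).subset_ball 0
      filter_upwards [eventually_gt_atTop R] with x hx
      have hxns : x ∉ tsupport fun y : ℝ => κ * deriv f (κ * y) * (y * Real.exp (-y ^ 2 / 2)) := by
        intro hmem
        have := hR hmem
        simp [Metric.mem_ball, Real.dist_eq, abs_lt] at this
        linarith
      have := image_eq_zero_of_notMem_tsupport hxns
      simpa using this
    have := integral_Ioi_of_hasDerivAt_of_tendsto hcont hder hint htend
    simpa using this
  have key2 : ∫ x in Set.Ioi (0:ℝ), x * Real.exp (-x ^ 2 / 2) = 1 := by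
    have hder : ∀ x ∈ Set.Ioi (0:ℝ),
        HasDerivAt (fun y : ℝ => -Real.exp (-y ^ 2 / 2)) (x * Real.exp (-x ^ 2 / 2)) x := by
      intro x _
      have := (hexp x).neg
      refine this.congr_deriv ?_
      ring
    have hcont : ContinuousWithinAt (fun y : ℝ => -Real.exp (-y ^ 2 / 2)) (Set.Ici 0) 0 :=
      hcexp.neg.continuousWithinAt
    have htend : Tendsto (fun y : ℝ => -Real.exp (-y ^ 2 / 2)) atTop (nhds 0) := by
      have hb : Tendsto (fun y : ℝ => -y ^ 2 / 2) atTop atBot := by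
        have h1 : Tendsto (fun y : ℝ => y ^ 2 / 2) atTop atTop :=
          (tendsto_pow_atTop (by norm_num)).atTop_div_const (by norm_num)
        exact (tendsto_neg_atTop_atBot.comp h1).congr fun y => by
          simp [Function.comp, neg_div]
      rw [show (0:ℝ) = -0 by ring]
      exact (Real.tendsto_exp_comp_nhds_zero.mpr hb).neg
    have := integral_Ioi_of_hasDerivAt_of_tendsto hcont hder int5 htend
    simpa using this
  -- split the integrals
  have eq1 : ∫ x in Set.Ioi (0:ℝ),
      (f (κ * x) * (x * Real.exp (-x ^ 2 / 2))
        - κ * (deriv f (κ * x) * Real.exp (-x ^ 2 / 2)))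
      = (∫ x in Set.Ioi (0:ℝ), f (κ * x) * (x * Real.exp (-x ^ 2 / 2)))
        - ∫ x in Set.Ioi (0:ℝ), κ * (deriv f (κ * x) * Real.exp (-x ^ 2 / 2)) :=
    integral_sub int1 (int2.const_mul κ)
  have eq2 : ∫ x in Set.Ioi (0:ℝ), κ * (deriv f (κ * x) * Real.exp (-x ^ 2 / 2))
      = κ * ∫ x in Set.Ioi (0:ℝ), deriv f (κ * x) * Real.exp (-x ^ 2 / 2) :=
    integral_const_mul κ _
  have eq3 : ∫ x in Set.Ioi (0:ℝ),
      (κ ^ 2 * (deriv (deriv f) (κ * x) * (x * Real.exp (-x ^ 2 / 2)))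
        + κ * (deriv f (κ * x) * Real.exp (-x ^ 2 / 2))
        - κ * (deriv f (κ * x) * (x ^ 2 * Real.exp (-x ^ 2 / 2))))
      = (∫ x in Set.Ioi (0:ℝ),
          (κ ^ 2 * (deriv (deriv f) (κ * x) * (x * Real.exp (-x ^ 2 / 2)))
            + κ * (deriv f (κ * x) * Real.exp (-x ^ 2 / 2))))
        - ∫ x in Set.Ioi (0:ℝ), κ * (deriv f (κ * x) * (x ^ 2 * Real.exp (-x ^ 2 / 2))) :=
    integral_sub ((int4.const_mul _).add (int2.const_mul _)) (int3.const_mul _)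
  have eq4 : ∫ x in Set.Ioi (0:ℝ),
      (κ ^ 2 * (deriv (deriv f) (κ * x) * (x * Real.exp (-x ^ 2 / 2)))
        + κ * (deriv f (κ * x) * Real.exp (-x ^ 2 / 2)))
      = (∫ x in Set.Ioi (0:ℝ),
          κ ^ 2 * (deriv (deriv f) (κ * x) * (x * Real.exp (-x ^ 2 / 2))))
        + ∫ x in Set.Ioi (0:ℝ), κ * (deriv f (κ * x) * Real.exp (-x ^ 2 / 2)) :=
    integral_add (int4.const_mul _) (int2.const_mul _)
  have eq5 : ∫ x in Set.Ioi (0:ℝ),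
      κ ^ 2 * (deriv (deriv f) (κ * x) * (x * Real.exp (-x ^ 2 / 2)))
      = κ ^ 2 * ∫ x in Set.Ioi (0:ℝ),
          deriv (deriv f) (κ * x) * (x * Real.exp (-x ^ 2 / 2)) :=
    integral_const_mul _ _
  have eq6 : ∫ x in Set.Ioi (0:ℝ), κ * (deriv f (κ * x) * (x ^ 2 * Real.exp (-x ^ 2 / 2)))
      = κ * ∫ x in Set.Ioi (0:ℝ), deriv f (κ * x) * (x ^ 2 * Real.exp (-x ^ 2 / 2)) :=
    integral_const_mul _ _
  have hR : ∫ x in Set.Ioi (0:ℝ),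
      (f 0 + κ * x * deriv f (κ * x) - κ ^ 2 * deriv (deriv f) (κ * x)) *
        (x * Real.exp (-x ^ 2 / 2))
      = ∫ x in Set.Ioi (0:ℝ),
        (f 0 * (x * Real.exp (-x ^ 2 / 2))
          + κ * (deriv f (κ * x) * (x ^ 2 * Real.exp (-x ^ 2 / 2)))
          - κ ^ 2 * (deriv (deriv f) (κ * x) * (x * Real.exp (-x ^ 2 / 2)))) := by
    congr 1
    funext x
    ring
  have eq7 : ∫ x in Set.Ioi (0:ℝ),
      (f 0 * (x * Real.exp (-x ^ 2 / 2))
        + κ * (deriv f (κ * x) * (x ^ 2 * Real.exp (-x ^ 2 / 2)))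
        - κ ^ 2 * (deriv (deriv f) (κ * x) * (x * Real.exp (-x ^ 2 / 2))))
      = (∫ x in Set.Ioi (0:ℝ),
          (f 0 * (x * Real.exp (-x ^ 2 / 2))
            + κ * (deriv f (κ * x) * (x ^ 2 * Real.exp (-x ^ 2 / 2)))))
        - ∫ x in Set.Ioi (0:ℝ),
            κ ^ 2 * (deriv (deriv f) (κ * x) * (x * Real.exp (-x ^ 2 / 2))) :=
    integral_sub ((int5.const_mul _).add (int3.const_mul _)) (int4.const_mul _)
  have eq8 : ∫ x in Set.Ioi (0:ℝ),
      (f 0 * (x * Real.exp (-x ^ 2 / 2))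
        + κ * (deriv f (κ * x) * (x ^ 2 * Real.exp (-x ^ 2 / 2))))
      = (∫ x in Set.Ioi (0:ℝ), f 0 * (x * Real.exp (-x ^ 2 / 2)))
        + ∫ x in Set.Ioi (0:ℝ), κ * (deriv f (κ * x) * (x ^ 2 * Real.exp (-x ^ 2 / 2))) :=
    integral_add (int5.const_mul _) (int3.const_mul _)
  have eq9 : ∫ x in Set.Ioi (0:ℝ), f 0 * (x * Real.exp (-x ^ 2 / 2))
      = f 0 * ∫ x in Set.Ioi (0:ℝ), x * Real.exp (-x ^ 2 / 2) :=
    integral_const_mul _ _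
  rw [hR]
  rw [eq1] at key0
  rw [eq3, eq4] at key1
  rw [eq7, eq8]
  rw [key2, mul_one] at eq9
  linarith [key0, key1, eq2, eq5, eq6, eq9]
end

section
/- For every μ ∈ (0,1), every t ∈ [0,1), and every a ≥ 0: (sin(πμ)/π) ∫₀¹ (1-z)^(-μ) z^(μ-1) exp(-a²/(2z(1-t))) dz + 1 - (1/(2^(μ-1)Γ(μ))) ∫_{a/√(1-t)}^∞ y^(2μ-1) e^(-y²/2) dy equals 1; equivalently, (sin(πμ)/π) ∫₀¹ (1-z)^(-μ) z^(μ-1) exp(-a²/(2z(1-t))) dz = (1/(2^(μ-1)Γ(μ))) ∫_{a/√(1-t)}^∞ y^(2μ-1) e^(-y²/2) dy. -/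
open Real MeasureTheory Set Function


lemma clm_img : (fun u : ℝ => (1+u)⁻¹) '' Set.Ioi 0 = Set.Ioo (0:ℝ) 1 := by
  ext z
  constructor
  · rintro ⟨u, hu, rfl⟩
    have hu' : (0:ℝ) < u := hu
    constructor
    · positivity
    · rw [inv_lt_one_iff₀]; right; linarith
  · rintro ⟨hz0, hz1⟩
    refine ⟨1/z - 1, ?_, ?_⟩
    · simp only [Set.mem_Ioi]
      have : 1 < 1/z := by rw [lt_div_iff₀ hz0]; linarith
      linarith
    · field_simp; ring

lemma L1 (μ c : ℝ) (hμ0 : 0 < μ) (hμ1 : μ < 1) (hc : 0 ≤ c) :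
    ∫ z in Set.Ioo (0:ℝ) 1, (1-z)^(-μ) * z^(μ-1) * Real.exp (-(c/z))
      = ∫ u in Set.Ioi (0:ℝ), u^(-μ) * (1+u)⁻¹ * Real.exp (-(c*(1+u))) := by
  have hderiv : ∀ u ∈ Set.Ioi (0:ℝ), HasDerivWithinAt (fun u : ℝ => (1+u)⁻¹)
      (-1 / (1+u)^2) (Set.Ioi 0) u := by
    intro u hu
    have hu' : (0:ℝ) < u := hu
    have h1 : HasDerivAt (fun u : ℝ => 1+u) 1 u := by
      simpa using (hasDerivAt_id u).const_add 1
    have := h1.inv (by positivity)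
    exact this.hasDerivWithinAt
  have hinj : Set.InjOn (fun u : ℝ => (1+u)⁻¹) (Set.Ioi 0) := by
    intro u hu v hv h
    have hu' : (0:ℝ) < u := hu
    have hv' : (0:ℝ) < v := hv
    simp only at h
    have := inv_injective h
    linarith [this]
  rw [← clm_img, integral_image_eq_integral_abs_deriv_smul measurableSet_Ioi hderiv hinj]
  apply setIntegral_congr_fun measurableSet_Ioi
  intro u hu
  have hu' : (0:ℝ) < u := hu
  have hv : (0:ℝ) < 1 + u := by linarith
  have h1 : 1 - (1+u)⁻¹ = u * (1+u)⁻¹ := by field_simp; ring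
  have h2 : (u * (1+u)⁻¹)^(-μ) = u^(-μ) * (1+u)^μ := by
    rw [Real.mul_rpow hu'.le (by positivity), Real.inv_rpow hv.le, ← Real.rpow_neg hv.le,
      neg_neg]
  have h3 : ((1+u)⁻¹)^(μ-1) = (1+u)^(1-μ) := by
    rw [Real.inv_rpow hv.le, ← Real.rpow_neg hv.le, neg_sub]
  have h4 : -(c / (1+u)⁻¹) = -(c*(1+u)) := by field_simp
  have habs : |(-1 / (1+u)^2)| = ((1+u)^2)⁻¹ := by
    rw [abs_div, abs_neg, abs_one, abs_of_pos (pow_pos hv 2), one_div]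
  have h5 : (1+u)^μ * (1+u)^(1-μ) = 1+u := by
    rw [← Real.rpow_add hv]; norm_num
  have hne : (1+u) ≠ 0 := hv.ne'
  simp only [smul_eq_mul, h1, h2, h3, h4, habs]
  rw [mul_assoc (u ^ (-μ)), h5]
  field_simp

lemma intker (μ c : ℝ) (hμ0 : 0 < μ) (hμ1 : μ < 1) (hc : 0 ≤ c) :
    IntegrableOn (fun u : ℝ => u^(-μ) * (1+u)⁻¹) (Set.Ioi 0) := by
  have h1 : IntegrableOn (fun u : ℝ => u^(-μ) * (1+u)⁻¹) (Set.Ioc 0 1) := by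
    rw [integrableOn_Ioc_iff_integrableOn_Ioo]
    have hb : IntegrableOn (fun u : ℝ => u ^ (-μ)) (Set.Ioo (0:ℝ) 1) := by
      have := intervalIntegral.intervalIntegrable_rpow' (show (-1:ℝ) < -μ by linarith) (a := 0) (b := 1)
      rwa [intervalIntegrable_iff_integrableOn_Ioo_of_le zero_le_one] at this
    refine Integrable.mono hb ?_ ?_
    · refine (Measurable.aestronglyMeasurable ?_).restrict
      fun_prop
    · filter_upwards [ae_restrict_mem measurableSet_Ioo] with u hu
      have hu0 : (0:ℝ) < u := hu.1
      have hv : (0:ℝ) < 1 + u := by linarith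
      rw [Real.norm_eq_abs, Real.norm_eq_abs, abs_of_nonneg (by positivity),
        abs_of_nonneg (by positivity)]
      calc u^(-μ) * (1+u)⁻¹ ≤ u^(-μ) * 1 := by
            gcongr
            rw [inv_le_one_iff₀]; right; linarith
        _ = u^(-μ) := mul_one _
  have h2 : IntegrableOn (fun u : ℝ => u^(-μ) * (1+u)⁻¹) (Set.Ioi 1) := by
    refine Integrable.mono (integrableOn_Ioi_rpow_of_lt (show -μ-1 < -1 by linarith) one_pos) ?_ ?_
    · refine (Measurable.aestronglyMeasurable ?_).restrict
      fun_prop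
    · filter_upwards [ae_restrict_mem measurableSet_Ioi] with u hu
      have hu0 : (0:ℝ) < u := lt_trans one_pos hu
      have hv : (0:ℝ) < 1 + u := by linarith
      rw [Real.norm_eq_abs, Real.norm_eq_abs, abs_of_nonneg (by positivity),
        abs_of_nonneg (Real.rpow_nonneg hu0.le _)]
      calc u^(-μ) * (1+u)⁻¹ ≤ u^(-μ) * u⁻¹ := by gcongr; linarith
        _ = u^(-μ-1) := by
            rw [Real.rpow_sub hu0, Real.rpow_one, div_eq_mul_inv]
  have : IntegrableOn (fun u : ℝ => u^(-μ) * (1+u)⁻¹) (Set.Ioc 0 1 ∪ Set.Ioi 1) := h1.union h2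
  apply this.mono_set
  intro x hx
  rcases le_or_gt x 1 with h | h
  · exact Or.inl ⟨hx, h⟩
  · exact Or.inr h

lemma L2 (μ c : ℝ) (hμ0 : 0 < μ) (hμ1 : μ < 1) (hc : 0 ≤ c) :
    ∫ u in Set.Ioi (0:ℝ), u^(-μ) * (1+u)⁻¹ * Real.exp (-(c*(1+u)))
      = Real.Gamma (1-μ) * ∫ x in Set.Ioi c, x^(μ-1) * Real.exp (-x) := by
  set F : ℝ → ℝ → ℝ := fun u x => u^(-μ) * Real.exp (-((1+u)*x)) with hF
  have step1 : ∀ u ∈ Set.Ioi (0:ℝ),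
      ∫ x in Set.Ioi c, F u x = u^(-μ) * (1+u)⁻¹ * Real.exp (-(c*(1+u))) := by
    intro u hu
    have hv : (0:ℝ) < 1 + u := by have : (0:ℝ) < u := hu; linarith
    rw [hF]
    simp only
    rw [MeasureTheory.integral_const_mul,
      integral_comp_mul_left_Ioi (fun y => Real.exp (-y)) c hv, integral_exp_neg_Ioi,
      smul_eq_mul]
    ring_nf
  have step2 : ∀ x ∈ Set.Ioi c,
      ∫ u in Set.Ioi (0:ℝ), F u x = Real.Gamma (1-μ) * (x^(μ-1) * Real.exp (-x)) := by
    intro x hx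
    have hx0 : (0:ℝ) < x := lt_of_le_of_lt hc hx
    have heq : ∀ u ∈ Set.Ioi (0:ℝ),
        F u x = Real.exp (-x) * (u^((1-μ)-1) * Real.exp (-(x*u))) := by
      intro u hu
      have hexp : Real.exp (-((1+u)*x)) = Real.exp (-(x*u)) * Real.exp (-x) := by
        rw [← Real.exp_add]; congr 1; ring
      rw [hF]
      simp only
      rw [hexp, show (1:ℝ)-μ-1 = -μ from by ring]
      ring
    rw [setIntegral_congr_fun measurableSet_Ioi heq, MeasureTheory.integral_const_mul,
      integral_rpow_mul_exp_neg_mul_Ioi (by linarith : (0:ℝ) < 1-μ) hx0]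
    have h1x : ((1:ℝ)/x)^(1-μ) = x^(μ-1) := by
      rw [one_div, Real.inv_rpow hx0.le, ← Real.rpow_neg hx0.le, neg_sub]
    rw [h1x]
    ring
  have hmeas : AEStronglyMeasurable (uncurry F)
      ((volume.restrict (Set.Ioi (0:ℝ))).prod (volume.restrict (Set.Ioi c))) := by
    apply Measurable.aestronglyMeasurable
    rw [hF]
    fun_prop
  have hgint : Integrable (fun u : ℝ => u^(-μ) * (1+u)⁻¹ * Real.exp (-(c*(1+u))))
      (volume.restrict (Set.Ioi (0:ℝ))) := by
    refine Integrable.mono (intker μ c hμ0 hμ1 hc) ?_ ?_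
    · apply Measurable.aestronglyMeasurable; fun_prop
    · filter_upwards [ae_restrict_mem measurableSet_Ioi] with u hu
      have hu0 : (0:ℝ) < u := hu
      have hv : (0:ℝ) < 1 + u := by linarith
      rw [Real.norm_eq_abs, Real.norm_eq_abs, abs_of_nonneg (by positivity),
        abs_of_nonneg (by positivity)]
      calc u^(-μ) * (1+u)⁻¹ * Real.exp (-(c*(1+u))) ≤ u^(-μ) * (1+u)⁻¹ * 1 := by
            gcongr
            exact Real.exp_le_one_iff.mpr (by nlinarith)
        _ = u^(-μ) * (1+u)⁻¹ := mul_one _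
  have hint : Integrable (Function.uncurry F)
      ((volume.restrict (Set.Ioi (0:ℝ))).prod (volume.restrict (Set.Ioi c))) := by
    rw [integrable_prod_iff hmeas]
    constructor
    · filter_upwards [ae_restrict_mem measurableSet_Ioi] with u hu
      have hv : (0:ℝ) < 1 + u := by have : (0:ℝ) < u := hu; linarith
      have h := (exp_neg_integrableOn_Ioi c hv).const_mul (u^(-μ))
      have : (fun x : ℝ => u^(-μ) * Real.exp (-(1+u) * x)) = fun x => Function.uncurry F (u, x) := by
        funext x
        simp only [hF, Function.uncurry, neg_mul]
      rw [this] at h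
      exact h
    · refine hgint.congr ?_
      filter_upwards [ae_restrict_mem measurableSet_Ioi] with u hu
      have hu0 : (0:ℝ) < u := hu
      have hnorm : ∀ x : ℝ, ‖Function.uncurry F (u, x)‖ = F u x := by
        intro x
        rw [Function.uncurry]
        simp only [hF]
        rw [Real.norm_eq_abs, abs_of_nonneg (by positivity)]
      rw [← step1 u hu]
      exact (setIntegral_congr_fun measurableSet_Ioi (fun x _ => hnorm x)).symm
  calc ∫ u in Set.Ioi (0:ℝ), u^(-μ) * (1+u)⁻¹ * Real.exp (-(c*(1+u)))
      = ∫ u in Set.Ioi (0:ℝ), ∫ x in Set.Ioi c, F u x :=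
        (setIntegral_congr_fun measurableSet_Ioi step1).symm
    _ = ∫ x in Set.Ioi c, ∫ u in Set.Ioi (0:ℝ), F u x := integral_integral_swap hint
    _ = ∫ x in Set.Ioi c, Real.Gamma (1-μ) * (x^(μ-1) * Real.exp (-x)) :=
        setIntegral_congr_fun measurableSet_Ioi step2
    _ = Real.Gamma (1-μ) * ∫ x in Set.Ioi c, x^(μ-1) * Real.exp (-x) :=
        MeasureTheory.integral_const_mul _ _

lemma sqrt_img (c : ℝ) (hc : 0 ≤ c) :
    (fun x : ℝ => Real.sqrt (2*x)) '' Set.Ioi c = Set.Ioi (Real.sqrt (2*c)) := by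
  ext y
  constructor
  · rintro ⟨x, hx, rfl⟩
    exact Real.sqrt_lt_sqrt (by linarith) (by simpa using (by linarith [mem_Ioi.mp hx] : 2*c < 2*x))
  · intro hy
    have hy0 : 0 < y := lt_of_le_of_lt (Real.sqrt_nonneg _) hy
    refine ⟨y^2/2, ?_, ?_⟩
    · have := (Real.sqrt_lt' hy0).mp hy
      simp only [Set.mem_Ioi]
      linarith
    · show Real.sqrt (2*(y^2/2)) = y
      rw [show 2*(y^2/2) = y^2 by ring, Real.sqrt_sq hy0.le]

lemma L3 (μ c : ℝ) (hc : 0 ≤ c) :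
    ∫ y in Set.Ioi (Real.sqrt (2*c)), y^(2*μ-1) * Real.exp (-y^2/2)
      = 2^(μ-1) * ∫ x in Set.Ioi c, x^(μ-1) * Real.exp (-x) := by
  have hderiv : ∀ x ∈ Set.Ioi c, HasDerivWithinAt (fun x : ℝ => Real.sqrt (2*x))
      (1 / (2 * Real.sqrt (2*x)) * 2) (Set.Ioi c) x := by
    intro x hx
    have hx0 : (0:ℝ) < x := lt_of_le_of_lt hc hx
    have h2x : (2:ℝ)*x ≠ 0 := by positivity
    have h1 : HasDerivAt (fun x : ℝ => 2*x) 2 x := by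
      simpa using (hasDerivAt_id x).const_mul 2
    exact ((Real.hasDerivAt_sqrt h2x).comp x h1).hasDerivWithinAt
  have hinj : Set.InjOn (fun x : ℝ => Real.sqrt (2*x)) (Set.Ioi c) := by
    intro x hx y hy h
    have hx0 : (0:ℝ) < x := lt_of_le_of_lt hc hx
    have hy0 : (0:ℝ) < y := lt_of_le_of_lt hc hy
    simp only at h
    nlinarith [Real.sq_sqrt (by positivity : (0:ℝ) ≤ 2*x), Real.sq_sqrt (by positivity : (0:ℝ) ≤ 2*y),
      congrArg (fun t => t^2) h]
  rw [← sqrt_img c hc, integral_image_eq_integral_abs_deriv_smul measurableSet_Ioi hderiv hinj,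
    ← MeasureTheory.integral_const_mul]
  apply setIntegral_congr_fun measurableSet_Ioi
  intro x hx
  have hx0 : (0:ℝ) < x := lt_of_le_of_lt hc hx
  have h2x : (0:ℝ) < 2*x := by linarith
  have hs : Real.sqrt (2*x) = (2*x)^((1:ℝ)/2) := Real.sqrt_eq_rpow _
  have hspos : 0 < Real.sqrt (2*x) := Real.sqrt_pos.mpr h2x
  have habs : |1 / (2 * Real.sqrt (2*x)) * 2| = (Real.sqrt (2*x))⁻¹ := by
    rw [abs_of_pos (by positivity)]
    field_simp
  have hsq : Real.sqrt (2*x) ^ (2:ℕ) = 2*x := Real.sq_sqrt h2x.le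
  have hpow : Real.sqrt (2*x) ^ (2*μ-1) = (2*x)^(μ-1/2) := by
    rw [hs, ← Real.rpow_mul h2x.le]
    congr 1
    ring
  have hexp : -Real.sqrt (2*x)^2/2 = -x := by rw [hsq]; ring
  have hinv : (Real.sqrt (2*x))⁻¹ = (2*x)^(-(1/2):ℝ) := by
    rw [hs, ← Real.rpow_neg h2x.le]
  simp only [smul_eq_mul, habs, hpow, hexp, hinv]
  rw [← mul_assoc, ← Real.rpow_add h2x, show (-(1/2):ℝ)+(μ-1/2) = μ-1 by ring,
    Real.mul_rpow (by norm_num : (0:ℝ) ≤ 2) hx0.le]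
  ring

theorem conditional_law_total_mass (μ : ℝ) (hμ : μ ∈ Set.Ioo (0:ℝ) 1)
    (t : ℝ) (ht : t ∈ Set.Ico (0:ℝ) 1) (a : ℝ) (ha : 0 ≤ a) :
    (Real.sin (Real.pi * μ) / Real.pi) *
        ∫ z in Set.Ioo (0:ℝ) 1,
          (1 - z) ^ (-μ) * z ^ (μ - 1) * Real.exp (-a ^ 2 / (2 * z * (1 - t))) =
      (1 / (2 ^ (μ - 1) * Real.Gamma μ)) *
        ∫ y in Set.Ioi (a / Real.sqrt (1 - t)), y ^ (2 * μ - 1) * Real.exp (-y ^ 2 / 2) := by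
  obtain ⟨hμ0, hμ1⟩ := hμ
  obtain ⟨ht0, ht1⟩ := ht
  have hs : (0:ℝ) < 1 - t := by linarith
  set c : ℝ := a^2 / (2*(1-t)) with hcdef
  have hc : 0 ≤ c := by positivity
  have hL : ∫ z in Set.Ioo (0:ℝ) 1,
      (1 - z) ^ (-μ) * z ^ (μ - 1) * Real.exp (-a ^ 2 / (2 * z * (1 - t)))
      = ∫ z in Set.Ioo (0:ℝ) 1, (1-z)^(-μ) * z^(μ-1) * Real.exp (-(c/z)) := by
    apply setIntegral_congr_fun measurableSet_Ioo
    intro z hz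
    have hz0 : (0:ℝ) < z := hz.1
    have harg : -a ^ 2 / (2 * z * (1 - t)) = -(c/z) := by
      rw [hcdef, div_div, neg_div]
      ring_nf
    show (1 - z) ^ (-μ) * z ^ (μ - 1) * Real.exp (-a ^ 2 / (2 * z * (1 - t)))
      = (1-z)^(-μ) * z^(μ-1) * Real.exp (-(c/z))
    rw [harg]
  have hb : a / Real.sqrt (1-t) = Real.sqrt (2*c) := by
    rw [hcdef, show 2*(a^2/(2*(1-t))) = a^2/(1-t) by field_simp,
      Real.sqrt_div (sq_nonneg a), Real.sqrt_sq ha]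
  rw [hL, hb, L1 μ c hμ0 hμ1 hc, L2 μ c hμ0 hμ1 hc, L3 μ c hc]
  have hΓ : Real.Gamma μ * Real.Gamma (1-μ) = Real.pi / Real.sin (Real.pi*μ) :=
    Real.Gamma_mul_Gamma_one_sub μ
  have hsin : 0 < Real.sin (Real.pi*μ) :=
    Real.sin_pos_of_pos_of_lt_pi (by positivity) (by nlinarith [Real.pi_pos])
  have hΓμ : 0 < Real.Gamma μ := Real.Gamma_pos_of_pos hμ0
  have h2 : (0:ℝ) < (2:ℝ)^(μ-1) := Real.rpow_pos_of_pos two_pos _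
  have key : Real.Gamma μ * Real.Gamma (1-μ) * Real.sin (Real.pi*μ) = Real.pi := by
    rw [hΓ]
    field_simp
  set I := ∫ x in Set.Ioi c, x^(μ-1) * Real.exp (-x) with hI
  have hπ : (0:ℝ) < Real.pi := Real.pi_pos
  have hΓ1 : 0 < Real.Gamma (1-μ) := Real.Gamma_pos_of_pos (by linarith)
  have hsg : Real.sin (Real.pi*μ) / Real.pi = 1/(Real.Gamma μ * Real.Gamma (1-μ)) := by
    rw [div_eq_div_iff hπ.ne' (by positivity)]
    linarith [key]
  have hR : 1/((2:ℝ)^(μ-1)*Real.Gamma μ) * ((2:ℝ)^(μ-1)*I) = I / Real.Gamma μ := by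
    field_simp
  rw [hsg, hR]
  field_simp
end

section
/- Doob's maximal identity: let (N_t)_{t≥0} be a continuous nonnegative local martingale with N₀ = x for a constant x > 0, and suppose N_t → 0 almost surely as t → ∞. Let S_∞ = sup_{t≥0} N_t. Then for every a > 0, P(S_∞ > a) = min(x/a, 1). -/
open Real MeasureTheory Filter
open scoped NNReal Topology

section Aux

variable {Ω : Type*} {m : MeasurableSpace Ω} {𝒢 : Filtration ℝ≥0 m} {P : Measure Ω}
  {N : ℝ≥0 → Ω → ℝ} {a x : ℝ} {ω : Ω}

lemma aux_exists_max (hc : Continuous fun s => N s ω) (r : ℝ≥0) :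
    ∃ s0 ≤ r, ∀ s ≤ r, N s ω ≤ N s0 ω := by
  obtain ⟨s0, hs0, hmax⟩ := (isCompact_Icc (a := (0:ℝ≥0)) (b := r)).exists_isMaxOn
    ⟨0, by simp⟩ hc.continuousOn
  exact ⟨s0, hs0.2, fun s hs => hmax ⟨zero_le, hs⟩⟩

lemma aux_exists_le_iff (hc : Continuous fun s => N s ω) (r : ℝ≥0) :
    (∃ s ≤ r, a ≤ N s ω) ↔
      a ≤ ⨆ n : ℕ, N (min (TopologicalSpace.denseSeq ℝ≥0 n) r) ω := by
  obtain ⟨s0, hs0r, hs0⟩ := aux_exists_max hc r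
  set u := TopologicalSpace.denseSeq ℝ≥0
  have hbdd : BddAbove (Set.range fun n : ℕ => N (min (u n) r) ω) := by
    refine ⟨N s0 ω, ?_⟩
    rintro _ ⟨n, rfl⟩
    exact hs0 _ (min_le_right _ _)
  constructor
  · rintro ⟨s, hsr, has⟩
    obtain ⟨f, hfmem, hftend⟩ := mem_closure_iff_seq_limit.1
      (by rw [(TopologicalSpace.denseRange_denseSeq ℝ≥0).closure_eq]; trivial :
        s ∈ closure (Set.range u))
    have htend : Tendsto (fun k => N (min (f k) r) ω) atTop (𝓝 (N s ω)) := by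
      have h1 : Tendsto (fun k => min (f k) r) atTop (𝓝 (min s r)) :=
        hftend.min tendsto_const_nhds
      rw [min_eq_left hsr] at h1
      exact (hc.tendsto s).comp h1
    refine has.trans (le_of_tendsto htend ?_)
    filter_upwards with k
    obtain ⟨n, hn⟩ := hfmem k
    rw [← hn]
    exact le_ciSup hbdd n
  · intro h
    exact ⟨s0, hs0r, h.trans (ciSup_le fun n => hs0 _ (min_le_right _ _))⟩

lemma aux_measurableSet_hit (hadp : ∀ t : ℝ≥0, StronglyMeasurable[𝒢 t] (N t))
    (hcont : ∀ ω, Continuous fun s => N s ω) (r : ℝ≥0) :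
    MeasurableSet[𝒢 r] {ω | ∃ s ≤ r, a ≤ N s ω} := by
  have heq : {ω | ∃ s ≤ r, a ≤ N s ω} =
      {ω | a ≤ ⨆ n : ℕ, N (min (TopologicalSpace.denseSeq ℝ≥0 n) r) ω} := by
    ext ω; exact aux_exists_le_iff (hcont ω) r
  rw [heq]
  exact measurableSet_le measurable_const
    (Measurable.iSup fun n =>
      ((hadp _).mono (𝒢.mono (min_le_right _ _))).measurable)

lemma aux_adapted {τ : ℕ → Ω → ℝ≥0} (hτtend : ∀ ω, Tendsto (fun n => τ n ω) atTop atTop)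
    (hmart : ∀ n, Martingale (stoppedProcess N (fun ω => (τ n ω : WithTop ℝ≥0))) 𝒢 P) (t : ℝ≥0) :
    StronglyMeasurable[𝒢 t] (N t) := by
  apply stronglyMeasurable_of_tendsto (f := fun n => stoppedProcess N (fun ω => (τ n ω : WithTop ℝ≥0)) t)
    (u := atTop) (fun n => (hmart n).stronglyAdapted t)
  rw [tendsto_pi_nhds]
  intro ω
  refine Tendsto.congr' ?_ tendsto_const_nhds
  filter_upwards [(hτtend ω).eventually_ge_atTop t] with n hn
  exact (stoppedProcess_eq_of_le (u := N) (τ := fun ω => (τ n ω : WithTop ℝ≥0))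
    (WithTop.coe_le_coe.2 hn)).symm

end Aux
section Hit

variable {Ω : Type*} {m : MeasurableSpace Ω} {𝒢 : Filtration ℝ≥0 m} {P : Measure Ω}
  {N : ℝ≥0 → Ω → ℝ} {a x : ℝ} {ω : Ω}

/-- The hitting time of level `a`, truncated at `t`. -/
noncomputable def hitT (N : ℝ≥0 → Ω → ℝ) (a : ℝ) (t : ℝ≥0) (ω : Ω) : ℝ≥0 :=
  sInf ({s | a ≤ N s ω} ∪ {t})

lemma hitT_le (N : ℝ≥0 → Ω → ℝ) (a : ℝ) (t : ℝ≥0) (ω : Ω) : hitT N a t ω ≤ t :=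
  csInf_le (OrderBot.bddBelow _) (Set.mem_union_right _ rfl)

lemma hitT_mem (hc : Continuous fun s => N s ω) (t : ℝ≥0) :
    hitT N a t ω ∈ {s | a ≤ N s ω} ∪ {t} := by
  refine IsClosed.csInf_mem ?_ ⟨t, Set.mem_union_right _ rfl⟩ (OrderBot.bddBelow _)
  exact (isClosed_le continuous_const hc).union isClosed_singleton

lemma lt_of_lt_hitT {t : ℝ≥0} {s : ℝ≥0} (hs : s < hitT N a t ω) : N s ω < a := by
  have := notMem_of_lt_csInf hs (OrderBot.bddBelow _)
  simp only [Set.mem_union, Set.mem_setOf_eq, not_or] at this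
  exact lt_of_not_ge this.1

lemma hitT_val_le (hc : Continuous fun s => N s ω) (hx0 : N 0 ω = x) (hax : x ≤ a)
    (t : ℝ≥0) : N (hitT N a t ω) ω ≤ a := by
  rcases eq_or_ne (hitT N a t ω) 0 with h0 | h0
  · rw [h0, hx0]; exact hax
  · by_contra hgt
    push_neg at hgt
    have hV : {s | a < N s ω} ∈ 𝓝 (hitT N a t ω) :=
      (isOpen_lt continuous_const hc).mem_nhds hgt
    have hne : (𝓝[<] (hitT N a t ω)).NeBot :=
      nhdsWithin_Iio_self_neBot' ⟨0, zero_lt_iff.mpr h0⟩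
    have h2 : ∀ᶠ s in 𝓝[<] (hitT N a t ω), a < N s ω :=
      mem_nhdsWithin_of_mem_nhds hV
    obtain ⟨s, hs2, hs1⟩ := (h2.and self_mem_nhdsWithin).exists
    exact absurd hs2 (not_lt.2 (lt_of_lt_hitT hs1).le)

lemma le_of_le_hitT (hc : Continuous fun s => N s ω) (hx0 : N 0 ω = x) (hax : x ≤ a)
    {t s : ℝ≥0} (hs : s ≤ hitT N a t ω) : N s ω ≤ a := by
  rcases lt_or_eq_of_le hs with h | h
  · exact (lt_of_lt_hitT h).le
  · rw [h]; exact hitT_val_le hc hx0 hax t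

lemma hitT_le_iff (hc : Continuous fun s => N s ω) {t r : ℝ≥0} :
    hitT N a t ω ≤ r ↔ (t ≤ r ∨ ∃ s ≤ r, a ≤ N s ω) := by
  constructor
  · intro h
    rcases hitT_mem (a := a) hc t with hmem | hmem
    · exact Or.inr ⟨_, h, hmem⟩
    · simp only [Set.mem_singleton_iff] at hmem
      exact Or.inl (hmem ▸ h)
  · rintro (h | ⟨s, hsr, has⟩)
    · exact (hitT_le N a t ω).trans h
    · exact (csInf_le (OrderBot.bddBelow _)
        (Set.mem_union_left _ (show s ∈ {s | a ≤ N s ω} from has))).trans hsr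

lemma hitT_isStoppingTime (hadp : ∀ t : ℝ≥0, StronglyMeasurable[𝒢 t] (N t))
    (hcont : ∀ ω, Continuous fun s => N s ω) (t : ℝ≥0) :
    IsStoppingTime 𝒢 (fun ω => (hitT N a t ω : WithTop ℝ≥0)) := by
  intro r
  simp only [WithTop.coe_le_coe]
  have : {ω | hitT N a t ω ≤ r} =
      {ω | t ≤ r ∨ ∃ s ≤ r, a ≤ N s ω} := by
    ext ω; exact hitT_le_iff (hcont ω)
  rw [this]
  by_cases htr : t ≤ r
  · simp only [htr, true_or]
    exact MeasurableSet.univ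
  · simp only [htr, false_or]
    exact aux_measurableSet_hit hadp hcont r

end Hit
section Dyad

variable {Ω : Type*} {m : MeasurableSpace Ω} {𝒢 : Filtration ℝ≥0 m} {P : Measure Ω}
  {N : ℝ≥0 → Ω → ℝ} {a x : ℝ} {ω : Ω}

lemma hitT_tendsto (hc : Continuous fun s => N s ω) (hx0 : N 0 ω = x) (hax : x ≤ a)
    (hω : Tendsto (fun t => N t ω) atTop (𝓝 0)) :
    Tendsto (fun n : ℕ => N (hitT N a (n : ℝ≥0) ω) ω) atTop
      (𝓝 (Set.indicator {ω | ∃ s, a ≤ N s ω} (fun _ => a) ω)) := by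
  by_cases hhit : ∃ s, a ≤ N s ω
  · have hA : {s | a ≤ N s ω}.Nonempty := hhit
    set s0 : ℝ≥0 := sInf {s | a ≤ N s ω} with hs0def
    have hs0mem : s0 ∈ {s | a ≤ N s ω} :=
      IsClosed.csInf_mem (isClosed_le continuous_const hc) hA (OrderBot.bddBelow _)
    have hval : ∀ n : ℕ, s0 ≤ (n : ℝ≥0) → hitT N a (n : ℝ≥0) ω = s0 := by
      intro n hn
      rw [hitT, csInf_union (OrderBot.bddBelow _) hA (OrderBot.bddBelow _)
        (Set.singleton_nonempty _), csInf_singleton]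
      exact min_eq_left hn
    obtain ⟨n0, hn0⟩ := exists_nat_ge s0
    have hNs0 : N s0 ω = a := by
      refine le_antisymm ?_ hs0mem
      have := hitT_val_le (t := (n0 : ℝ≥0)) hc hx0 hax
      rwa [hval n0 hn0] at this
    rw [Set.indicator_of_mem (show ω ∈ {ω | ∃ s, a ≤ N s ω} from hhit)]
    obtain ⟨n1, hn1⟩ := eventually_atTop.1
      ((tendsto_natCast_atTop_atTop (R := ℝ≥0)).eventually_ge_atTop s0)
    exact tendsto_atTop_of_eventually_const (i₀ := n1) fun n hn => by rw [hval n (hn1 n hn), hNs0]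
  · have hA : {s | a ≤ N s ω} = ∅ := by
      rw [Set.eq_empty_iff_forall_notMem]; exact fun s hs => hhit ⟨s, hs⟩
    have hval : ∀ n : ℕ, hitT N a (n : ℝ≥0) ω = (n : ℝ≥0) := by
      intro n; rw [hitT, hA, Set.empty_union, csInf_singleton]
    rw [Set.indicator_of_notMem (show ω ∉ {ω | ∃ s, a ≤ N s ω} from hhit)]
    simp only [hval]
    exact hω.comp tendsto_natCast_atTop_atTop

lemma hit_measurableSet (hadp : ∀ t : ℝ≥0, StronglyMeasurable[𝒢 t] (N t))
    (hcont : ∀ ω, Continuous fun s => N s ω) :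
    MeasurableSet[m] {ω | ∃ s, a ≤ N s ω} := by
  have : {ω | ∃ s, a ≤ N s ω} = ⋃ n : ℕ, {ω | ∃ s ≤ (n : ℝ≥0), a ≤ N s ω} := by
    ext ω
    simp only [Set.mem_setOf_eq, Set.mem_iUnion]
    constructor
    · rintro ⟨s, hs⟩
      obtain ⟨n, hn⟩ := exists_nat_ge s
      exact ⟨n, s, hn, hs⟩
    · rintro ⟨n, s, _, hs⟩
      exact ⟨s, hs⟩
  rw [this]
  exact MeasurableSet.iUnion fun n => 𝒢.le _ _ (aux_measurableSet_hit hadp hcont _)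

/-- Dyadic upper approximation of the truncated hitting time. -/
noncomputable def dyad (N : ℝ≥0 → Ω → ℝ) (a : ℝ) (t : ℝ≥0) (k : ℕ) (ω : Ω) : ℝ≥0 :=
  (⌈hitT N a t ω * 2 ^ k⌉₊ : ℝ≥0) / 2 ^ k

lemma hitT_le_dyad (t : ℝ≥0) (k : ℕ) : hitT N a t ω ≤ dyad N a t k ω :=
  (le_div_iff₀ (pow_pos two_pos k)).2 (Nat.le_ceil _)

lemma dyad_le_add (t : ℝ≥0) (k : ℕ) : dyad N a t k ω ≤ hitT N a t ω + (1 / 2) ^ k := by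
  rw [dyad, div_le_iff₀ (pow_pos two_pos k)]
  calc (⌈hitT N a t ω * 2 ^ k⌉₊ : ℝ≥0) ≤ hitT N a t ω * 2 ^ k + 1 :=
        (Nat.ceil_lt_add_one zero_le).le
    _ = (hitT N a t ω + (1 / 2) ^ k) * 2 ^ k := by
        rw [add_mul, div_pow, one_pow, one_div, inv_mul_cancel₀ (pow_ne_zero k two_ne_zero)]

lemma dyad_le (t : ℝ≥0) (k : ℕ) : dyad N a t k ω ≤ t + 1 := by
  refine (dyad_le_add t k).trans (add_le_add (hitT_le N a t ω) ?_)
  calc ((1:ℝ≥0) / 2) ^ k ≤ 1 ^ k := pow_le_pow_left₀ zero_le (by norm_num) k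
    _ = 1 := one_pow k

lemma dyad_tendsto (t : ℝ≥0) :
    Tendsto (fun k => dyad N a t k ω) atTop (𝓝 (hitT N a t ω)) := by
  have h1 : Tendsto (fun k : ℕ => hitT N a t ω + (1 / 2) ^ k) atTop (𝓝 (hitT N a t ω)) := by
    nth_rewrite 2 [← add_zero (hitT N a t ω)]
    have hhalf : ((1:ℝ≥0)/2) < 1 := by
      rw [div_lt_one (by norm_num : (0:ℝ≥0) < 2)]; exact one_lt_two
    have h2 : Tendsto (fun k : ℕ => ((1:ℝ≥0) / 2) ^ k) atTop (𝓝 0) :=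
      NNReal.tendsto_pow_atTop_nhds_zero_of_lt_one hhalf
    exact tendsto_const_nhds.add h2
  exact tendsto_of_tendsto_of_tendsto_of_le_of_le tendsto_const_nhds h1
    (fun k => hitT_le_dyad t k) fun k => dyad_le_add t k

lemma dyad_le_iff (t r : ℝ≥0) (k : ℕ) :
    dyad N a t k ω ≤ r ↔ hitT N a t ω ≤ (⌊r * 2 ^ k⌋₊ : ℝ≥0) / 2 ^ k := by
  rw [dyad, div_le_iff₀ (pow_pos two_pos k),
    le_div_iff₀ (pow_pos two_pos k)]
  constructor
  · intro h
    calc hitT N a t ω * 2 ^ k ≤ (⌈hitT N a t ω * 2 ^ k⌉₊ : ℝ≥0) := Nat.le_ceil _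
      _ ≤ (⌊r * 2 ^ k⌋₊ : ℝ≥0) := Nat.cast_le.2 (Nat.le_floor h)
  · intro h
    calc ((⌈hitT N a t ω * 2 ^ k⌉₊ : ℝ≥0)) ≤ (⌊r * 2 ^ k⌋₊ : ℝ≥0) :=
        Nat.cast_le.2 (Nat.ceil_le.2 h)
      _ ≤ r * 2 ^ k := Nat.floor_le zero_le

lemma dyad_isStoppingTime (hadp : ∀ t : ℝ≥0, StronglyMeasurable[𝒢 t] (N t))
    (hcont : ∀ ω, Continuous fun s => N s ω) (t : ℝ≥0) (k : ℕ) :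
    IsStoppingTime 𝒢 (dyad N a t k (ω := ·)) := by
  intro r
  simp only [WithTop.coe_le_coe]
  have heq : {ω | dyad N a t k ω ≤ r} = {ω | hitT N a t ω ≤ (⌊r * 2 ^ k⌋₊ : ℝ≥0) / 2 ^ k} := by
    ext ω; exact dyad_le_iff t r k
  rw [heq]
  have hle : (⌊r * 2 ^ k⌋₊ : ℝ≥0) / 2 ^ k ≤ r := by
    rw [div_le_iff₀ (pow_pos two_pos k)]
    exact Nat.floor_le zero_le
  exact 𝒢.mono hle _ (by
    have := hitT_isStoppingTime (a := a) hadp hcont t ((⌊r * 2 ^ k⌋₊ : ℝ≥0) / 2 ^ k)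
    simpa only [WithTop.coe_le_coe] using this)

lemma dyad_countable_range (t : ℝ≥0) (k : ℕ) :
    (Set.range (dyad N a t k (ω := ·))).Countable := by
  refine (Set.countable_range fun n : ℕ => (n : ℝ≥0) / 2 ^ k).mono ?_
  rintro _ ⟨ω, rfl⟩
  exact ⟨⌈hitT N a t ω * 2 ^ k⌉₊, rfl⟩

end Dyad
section Core

variable {Ω : Type*} {m : MeasurableSpace Ω} {𝒢 : Filtration ℝ≥0 m} {P : Measure Ω}
  {N : ℝ≥0 → Ω → ℝ} {a x : ℝ}

lemma integral_hitT [IsProbabilityMeasure P] {τ : ℕ → Ω → ℝ≥0}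
    (hτtend : ∀ ω, Tendsto (fun n => τ n ω) atTop atTop)
    (hmart : ∀ n, Martingale (stoppedProcess N (fun ω => (τ n ω : WithTop ℝ≥0))) 𝒢 P)
    (hcont : ∀ ω, Continuous fun t => N t ω)
    (hnonneg : ∀ t ω, 0 ≤ N t ω)
    (h0 : ∀ ω, N 0 ω = x) (hax : x ≤ a) (t : ℝ≥0) :
    AEStronglyMeasurable (fun ω => N (hitT N a t ω) ω) P ∧
      ∫ ω, N (hitT N a t ω) ω ∂P = x := by
  have hadp : ∀ t, StronglyMeasurable[𝒢 t] (N t) := aux_adapted hτtend hmart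
  -- Step 1: for each localization index n, the value at the (truncated, localized)
  -- hitting time has expectation x.
  have hstep1 : ∀ n : ℕ,
      AEStronglyMeasurable (fun ω => N (min (hitT N a t ω) (τ n ω)) ω) P ∧
        ∫ ω, N (min (hitT N a t ω) (τ n ω)) ω ∂P = x := by
    intro n
    set M := stoppedProcess N (fun ω => (τ n ω : WithTop ℝ≥0)) with hM
    have hTst : ∀ k, IsStoppingTime 𝒢 (fun ω => dyad N a t k ω) :=
      fun k => dyad_isStoppingTime hadp hcont t k
    have hTle : ∀ k (ω : Ω), (dyad N a t k ω : WithTop ℝ≥0) ≤ ((t + 1 : ℝ≥0) : WithTop ℝ≥0) :=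
        fun k ω => WithTop.coe_le_coe.2 (dyad_le t k)
    -- optional sampling at the dyadic approximations
    have hos : ∀ k, stoppedValue M (fun ω => dyad N a t k ω) =ᵐ[P]
        P[M (t+1) | ((hTst k).measurableSpace)] := fun k =>
      (hmart n).stoppedValue_ae_eq_condExp_of_le_const_of_countable_range
        (hTst k) (hTle k) (by
          rw [show (fun ω => (dyad N a t k ω : WithTop ℝ≥0)) = ((↑) : ℝ≥0 → WithTop ℝ≥0) ∘ (dyad N a t k (ω := ·)) from rfl,
            Set.range_comp]
          exact (dyad_countable_range t k).image _)
    have hMt1_int : Integrable (M (t+1)) P := (hmart n).integrable (t+1)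
    -- expectation of the martingale at time t+1 is x
    have hEMt1 : ∫ ω, M (t+1) ω ∂P = x := by
      have h1 : ∫ ω, M (t+1) ω ∂P = ∫ ω, M 0 ω ∂P := by
        rw [← integral_condExp (𝒢.le 0) (f := M (t+1))]
        exact integral_congr_ae ((hmart n).condExp_ae_eq (zero_le : (0:ℝ≥0) ≤ t+1))
      have h2 : ∀ ω, M 0 ω = x := by
        intro ω
        simp only [hM, stoppedProcess]
        rw [min_eq_left (WithTop.coe_le_coe.2 zero_le), WithTop.untopA_eq_untop WithTop.coe_ne_top, WithTop.untop_coe, h0]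
      rw [h1]
      simp only [h2, integral_const, probReal_univ, ENNReal.toReal_one, one_smul]
    have hint_sv : ∀ k, ∫ ω, stoppedValue M (fun ω => dyad N a t k ω) ω ∂P = x := by
      intro k
      rw [integral_congr_ae (hos k),
        integral_condExp ((hTst k).measurableSpace_le_of_le (hTle k))]
      exact hEMt1
    -- Vitali convergence as k → ∞
    set F : ℕ → Ω → ℝ := fun k ω => stoppedValue M (fun ω => dyad N a t k ω) ω with hF
    set G : Ω → ℝ := fun ω => N (min (hitT N a t ω) (τ n ω)) ω with hG
    have hFtend : ∀ ω, Tendsto (fun k => F k ω) atTop (𝓝 (G ω)) := by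
      intro ω
      have h1 : Tendsto (fun k => min (dyad N a t k ω) (τ n ω)) atTop
          (𝓝 (min (hitT N a t ω) (τ n ω))) := (dyad_tendsto t).min tendsto_const_nhds
      have h2 := ((hcont ω).tendsto _).comp h1
      simpa only [hF, hG, stoppedValue, hM, stoppedProcess, Function.comp_def,
        WithTop.untopA_eq_untop WithTop.coe_ne_top, WithTop.untop_coe, ← WithTop.coe_min] using h2
    have hFmeas : ∀ k, AEStronglyMeasurable (F k) P := fun k =>
      (stronglyMeasurable_condExp.mono
        ((hTst k).measurableSpace_le_of_le (hTle k))).aestronglyMeasurable.congr (hos k).symm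
    have hGmeas : AEStronglyMeasurable G P :=
      aestronglyMeasurable_of_tendsto_ae atTop hFmeas (Eventually.of_forall hFtend)
    have hGbdd : ∀ ω, ‖G ω‖ ≤ a := by
      intro ω
      rw [hG, Real.norm_eq_abs, abs_of_nonneg (hnonneg _ _)]
      exact le_of_le_hitT (hcont ω) (h0 ω) hax (min_le_left _ _)
    have hGint : Integrable G P :=
      (integrable_const a).mono' hGmeas (Eventually.of_forall hGbdd)
    have hUI : UnifIntegrable F 1 P := by
      have h1 : UniformIntegrable (fun k => P[M (t+1) | ((hTst k).measurableSpace)]) 1 P :=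
        hMt1_int.uniformIntegrable_condExp fun k => (hTst k).measurableSpace_le_of_le (hTle k)
      exact h1.2.1.ae_eq fun k => (hos k).symm
    have hinmeas : TendstoInMeasure P F atTop G :=
      tendstoInMeasure_of_tendsto_ae hFmeas (Eventually.of_forall hFtend)
    have hLp := tendsto_Lp_finite_of_tendstoInMeasure le_rfl ENNReal.one_ne_top hFmeas
      (memLp_one_iff_integrable.2 hGint) hUI hinmeas
    have hFint : ∀ k, Integrable (F k) P := fun k => integrable_condExp.congr (hos k).symm
    have hIG := tendsto_integral_of_L1' G hGint.1 (Eventually.of_forall hFint) hLp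
    refine ⟨hGmeas, ?_⟩
    have hconst : Tendsto (fun _ : ℕ => x) atTop (𝓝 (∫ ω, G ω ∂P)) := by
      refine hIG.congr fun k => ?_
      rw [← hint_sv k]
    exact (tendsto_nhds_unique hconst tendsto_const_nhds)
  -- Step 2: let n → ∞, dominated convergence
  have hHtend : ∀ ω, Tendsto (fun n : ℕ => N (min (hitT N a t ω) (τ n ω)) ω) atTop
      (𝓝 (N (hitT N a t ω) ω)) := by
    intro ω
    obtain ⟨n0, hn0⟩ := eventually_atTop.1 ((hτtend ω).eventually_ge_atTop (hitT N a t ω))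
    exact tendsto_atTop_of_eventually_const (i₀ := n0) fun n hn => by
      rw [min_eq_left (hn0 n hn)]
  have hHmeas : AEStronglyMeasurable (fun ω => N (hitT N a t ω) ω) P :=
    aestronglyMeasurable_of_tendsto_ae atTop (fun n => (hstep1 n).1)
      (Eventually.of_forall hHtend)
  refine ⟨hHmeas, ?_⟩
  have hDCT := tendsto_integral_of_dominated_convergence (fun _ => a)
    (fun n => (hstep1 n).1) (integrable_const a)
    (fun n => Eventually.of_forall fun ω => by
      rw [Real.norm_eq_abs, abs_of_nonneg (hnonneg _ _)]
      exact le_of_le_hitT (hcont ω) (h0 ω) hax (min_le_left _ _))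
    (Eventually.of_forall hHtend)
  have hconst : Tendsto (fun _ : ℕ => x) atTop (𝓝 (∫ ω, N (hitT N a t ω) ω ∂P)) := by
    refine hDCT.congr fun n => ?_
    rw [← (hstep1 n).2]
  exact tendsto_nhds_unique hconst tendsto_const_nhds

end Core
section Final

variable {Ω : Type*} {m : MeasurableSpace Ω} {𝒢 : Filtration ℝ≥0 m} {P : Measure Ω}
  {N : ℝ≥0 → Ω → ℝ} {a x : ℝ}

lemma hit_prob [IsProbabilityMeasure P] {τ : ℕ → Ω → ℝ≥0}
    (hτtend : ∀ ω, Tendsto (fun n => τ n ω) atTop atTop)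
    (hmart : ∀ n, Martingale (stoppedProcess N (fun ω => (τ n ω : WithTop ℝ≥0))) 𝒢 P)
    (hcont : ∀ ω, Continuous fun t => N t ω)
    (hnonneg : ∀ t ω, 0 ≤ N t ω)
    (h0 : ∀ ω, N 0 ω = x)
    (hlim : ∀ᵐ ω ∂P, Tendsto (fun t => N t ω) atTop (𝓝 0))
    (hx : 0 < x) (hax : x ≤ a) :
    P {ω | ∃ s, a ≤ N s ω} = ENNReal.ofReal (x / a) := by
  have hadp : ∀ t, StronglyMeasurable[𝒢 t] (N t) := aux_adapted hτtend hmart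
  have hmeas : MeasurableSet {ω | ∃ s, a ≤ N s ω} := hit_measurableSet hadp hcont
  have hDCT := tendsto_integral_of_dominated_convergence (μ := P)
    (F := fun n : ℕ => fun ω => N (hitT N a (n : ℝ≥0) ω) ω)
    (f := fun ω => Set.indicator {ω | ∃ s, a ≤ N s ω} (fun _ => a) ω)
    (fun _ => a)
    (fun n => (integral_hitT hτtend hmart hcont hnonneg h0 hax (n : ℝ≥0)).1)
    (integrable_const a)
    (fun n => Eventually.of_forall fun ω => by
      rw [Real.norm_eq_abs, abs_of_nonneg (hnonneg _ _)]
      exact le_of_le_hitT (hcont ω) (h0 ω) hax le_rfl)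
    (hlim.mono fun ω hω => hitT_tendsto (hcont ω) (h0 ω) hax hω)
  have hconstx : Tendsto (fun _ : ℕ => x) atTop
      (𝓝 (∫ ω, Set.indicator {ω | ∃ s, a ≤ N s ω} (fun _ => a) ω ∂P)) := by
    refine hDCT.congr fun n => ?_
    rw [← (integral_hitT hτtend hmart hcont hnonneg h0 hax (n : ℝ≥0)).2]
  have heq : (P {ω | ∃ s, a ≤ N s ω}).toReal * a = x := by
    have h1 : ∫ ω, Set.indicator {ω | ∃ s, a ≤ N s ω} (fun _ => a) ω ∂P
        = (P {ω | ∃ s, a ≤ N s ω}).toReal * a := by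
      rw [integral_indicator_const a hmeas, smul_eq_mul, measureReal_def]
    rw [← h1]
    exact tendsto_nhds_unique hconstx tendsto_const_nhds
  have ha0 : (0:ℝ) < a := lt_of_lt_of_le hx hax
  have htr : (P {ω | ∃ s, a ≤ N s ω}).toReal = x / a := by
    rw [eq_div_iff (ne_of_gt ha0)]
    exact heq
  rw [← htr, ENNReal.ofReal_toReal (measure_ne_top P _)]

end Final

/-- A local martingale: there is a localizing sequence of stopping times increasing to
infinity such that each stopped process is a martingale. -/
def IsLocalMartingale {Ω : Type*} {m : MeasurableSpace Ω} (𝒢 : Filtration ℝ≥0 m)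
    (P : Measure Ω) (N : ℝ≥0 → Ω → ℝ) : Prop :=
  ∃ τ : ℕ → Ω → ℝ≥0,
    (∀ n, IsStoppingTime 𝒢 (fun ω => (τ n ω : WithTop ℝ≥0))) ∧
    (∀ ω, Monotone fun n => τ n ω) ∧
    (∀ ω, Tendsto (fun n => τ n ω) atTop atTop) ∧
    ∀ n, Martingale (stoppedProcess N (fun ω => (τ n ω : WithTop ℝ≥0))) 𝒢 P

/-- Doob's maximal identity. -/
theorem doob_maximal_identity {Ω : Type*} {m : MeasurableSpace Ω}
    (𝒢 : Filtration ℝ≥0 m) (P : Measure Ω) [IsProbabilityMeasure P]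
    (N : ℝ≥0 → Ω → ℝ) (x : ℝ) (hx : 0 < x)
    (hloc : IsLocalMartingale 𝒢 P N)
    (hcont : ∀ ω, Continuous fun t => N t ω)
    (hnonneg : ∀ t ω, 0 ≤ N t ω)
    (h0 : ∀ ω, N 0 ω = x)
    (hlim : ∀ᵐ ω ∂P, Tendsto (fun t => N t ω) atTop (𝓝 0)) :
    ∀ a : ℝ, 0 < a →
      P {ω | a < ⨆ t, N t ω} = ENNReal.ofReal (min (x / a) 1) := by
  obtain ⟨τ, hτ, hτmono, hτtend, hmart⟩ := hloc
  intro a ha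
  -- probability of hitting level b, for every positive b
  have hHit : ∀ b : ℝ, 0 < b → P {ω | ∃ s, b ≤ N s ω} = ENNReal.ofReal (min (x / b) 1) := by
    intro b hb
    by_cases hbx : x ≤ b
    · rw [hit_prob hτtend hmart hcont hnonneg h0 hlim hx hbx]
      congr 1
      rw [min_eq_left ((div_le_one hb).2 hbx)]
    · push_neg at hbx
      have huniv : {ω | ∃ s, b ≤ N s ω} = Set.univ := by
        ext ω
        simp only [Set.mem_setOf_eq, Set.mem_univ, iff_true]
        exact ⟨0, by rw [h0]; exact hbx.le⟩
      rw [huniv, measure_univ, min_eq_right ((one_le_div hb).2 hbx.le), ENNReal.ofReal_one]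
  set U : ℕ → Set Ω := fun n => {ω | ∃ s, a + 1 / (n + 1) ≤ N s ω} with hU
  have hUmono : Monotone U := by
    intro n k hnk ω hω
    obtain ⟨s, hs⟩ := hω
    refine ⟨s, le_trans ?_ hs⟩
    have hcast : (n : ℝ) ≤ (k : ℝ) := Nat.cast_le.2 hnk
    have h1 : (1:ℝ) / (k + 1) ≤ 1 / (n + 1) :=
      one_div_le_one_div_of_le (by positivity) (by linarith)
    linarith
  have hPU : Tendsto (fun n => P (U n)) atTop (𝓝 (P (⋃ n, U n))) :=
    tendsto_measure_iUnion_atTop hUmono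
  have hval : ∀ n : ℕ, P (U n) = ENNReal.ofReal (min (x / (a + 1 / (n + 1))) 1) :=
    fun n => hHit _ (by positivity)
  have hlim2 : Tendsto (fun n : ℕ => ENNReal.ofReal (min (x / (a + 1 / (n + 1))) 1)) atTop
      (𝓝 (ENNReal.ofReal (min (x / a) 1))) := by
    apply ENNReal.tendsto_ofReal
    have h1 : Tendsto (fun n : ℕ => a + 1 / ((n : ℝ) + 1)) atTop (𝓝 a) := by
      have h0' : Tendsto (fun n : ℕ => a + 1 / ((n : ℝ) + 1)) atTop (𝓝 (a + 0)) :=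
        Tendsto.add tendsto_const_nhds tendsto_one_div_add_atTop_nhds_zero_nat
      simpa using h0'
    exact Tendsto.min (tendsto_const_nhds.div h1 (ne_of_gt ha)) tendsto_const_nhds
  have hPUeq : P (⋃ n, U n) = ENNReal.ofReal (min (x / a) 1) :=
    tendsto_nhds_unique (hPU.congr hval) hlim2
  have hae : {ω | a < ⨆ t, N t ω} =ᵐ[P] ⋃ n, U n := by
    rw [Filter.eventuallyEq_set]
    filter_upwards [hlim] with ω hω
    have hbdd : BddAbove (Set.range fun t => N t ω) := by
      obtain ⟨T, hT⟩ := eventually_atTop.1 (hω.eventually_le_const one_pos)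
      obtain ⟨s0, _, hs0⟩ := aux_exists_max (hcont ω) T
      refine ⟨max 1 (N s0 ω), ?_⟩
      rintro _ ⟨t, rfl⟩
      rcases le_total t T with h | h
      · exact le_max_of_le_right (hs0 t h)
      · exact le_max_of_le_left (hT t h)
    constructor
    · intro hsup
      obtain ⟨t, ht⟩ := exists_lt_of_lt_ciSup hsup
      obtain ⟨n, hn⟩ := exists_nat_one_div_lt (sub_pos.2 ht)
      exact Set.mem_iUnion.2 ⟨n, t, by linarith⟩
    · intro hUmem
      obtain ⟨n, s, hs⟩ := Set.mem_iUnion.1 hUmem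
      have h1 : N s ω ≤ ⨆ t, N t ω := le_ciSup hbdd s
      have h2 : (0:ℝ) < 1 / ((n:ℝ) + 1) := by positivity
      show a < ⨆ t, N t ω
      linarith
  rw [measure_congr hae, hPUeq]
end

section
/- Let μ ∈ (0,1). For every t ∈ (0,1) and x ≥ 0, (sin(πμ)/π) ∫_t^1 (1-u)^(-μ)(u-t)^(μ-1) exp(-x²/(2(u-t))) du ≤ 1, with equality if and only if x = 0. -/
open Real MeasureTheory

theorem conditional_mass_le_one (μ : ℝ) (hμ : μ ∈ Set.Ioo (0:ℝ) 1)
    (t : ℝ) (ht : t ∈ Set.Ioo (0:ℝ) 1) (x : ℝ) (hx : 0 ≤ x) :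
    (Real.sin (Real.pi * μ) / Real.pi) *
        (∫ u in Set.Ioo t 1,
          (1 - u) ^ (-μ) * (u - t) ^ (μ - 1) * Real.exp (-x ^ 2 / (2 * (u - t)))) ≤ 1 ∧
    ((Real.sin (Real.pi * μ) / Real.pi) *
        (∫ u in Set.Ioo t 1,
          (1 - u) ^ (-μ) * (u - t) ^ (μ - 1) * Real.exp (-x ^ 2 / (2 * (u - t)))) = 1
      ↔ x = 0) := by
  obtain ⟨h0, h1⟩ := hμ
  obtain ⟨ht0, ht1⟩ := ht
  -- Step A/B : the real Beta integral
  have hμc : 0 < (μ : ℂ).re := by simpa using h0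
  have hvc : 0 < ((1 : ℂ) - μ).re := by simp [Complex.sub_re]; linarith
  set f : ℝ → ℝ := fun s => s ^ (μ - 1) * (1 - s) ^ (-μ) with hf
  have hfi : IntervalIntegrable f volume 0 1 := by
    have hC := Complex.betaIntegral_convergent hμc hvc
    rw [intervalIntegrable_iff_integrableOn_Ioc_of_le (by norm_num : (0:ℝ) ≤ 1)] at hC ⊢
    have heq : Set.EqOn (fun s : ℝ => ((s ^ (μ - 1) * (1 - s) ^ (-μ) : ℝ) : ℂ))
        (fun s : ℝ => (s : ℂ) ^ ((μ:ℂ) - 1) * (1 - (s:ℂ)) ^ ((1:ℂ) - μ - 1)) (Set.Ioc 0 1) := by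
      intro s hs
      simp only
      rw [show (1:ℂ) - (μ:ℂ) - 1 = ((-μ : ℝ) : ℂ) by push_cast; ring,
        show (μ:ℂ) - 1 = ((μ - 1 : ℝ) : ℂ) by push_cast; ring,
        show (1:ℂ) - (s:ℂ) = ((1 - s : ℝ) : ℂ) by push_cast; ring,
        ← Complex.ofReal_cpow hs.1.le (μ - 1), ← Complex.ofReal_cpow (by linarith [hs.2]) (-μ)]
      push_cast
      ring
    have hC' : IntegrableOn (fun s : ℝ => ((s ^ (μ - 1) * (1 - s) ^ (-μ) : ℝ) : ℂ))
        (Set.Ioc 0 1) := hC.congr_fun heq.symm measurableSet_Ioc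
    have h2 : IntegrableOn (fun s : ℝ =>
        RCLike.re ((s ^ (μ - 1) * (1 - s) ^ (-μ) : ℝ) : ℂ)) (Set.Ioc 0 1) := hC'.re
    exact (IntegrableOn.congr_fun h2 (fun s _ => by simp [hf]) measurableSet_Ioc)
  have hfB : ∫ s in (0:ℝ)..1, f s = π / Real.sin (π * μ) := by
    have key := Complex.Gamma_mul_Gamma_eq_betaIntegral hμc hvc
    rw [show (μ : ℂ) + (1 - μ) = 1 by ring, Complex.Gamma_one, one_mul] at key
    have heq : Complex.betaIntegral μ (1 - μ)
        = ((∫ s in (0:ℝ)..1, f s : ℝ) : ℂ) := by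
      rw [Complex.betaIntegral, ← intervalIntegral.integral_ofReal]
      refine intervalIntegral.integral_congr fun s hs => ?_
      rw [Set.uIcc_of_le (by norm_num : (0:ℝ) ≤ 1)] at hs
      rw [show (1:ℂ) - (μ:ℂ) - 1 = ((-μ : ℝ) : ℂ) by push_cast; ring,
        show (μ:ℂ) - 1 = ((μ - 1 : ℝ) : ℂ) by push_cast; ring,
        show (1:ℂ) - (s:ℂ) = ((1 - s : ℝ) : ℂ) by push_cast; ring,
        ← Complex.ofReal_cpow hs.1 (μ - 1), ← Complex.ofReal_cpow (by linarith [hs.2]) (-μ)]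
      simp only [hf]
      push_cast
      ring
    have hrefl := Real.Gamma_mul_Gamma_one_sub μ
    have h2 : (↑(Real.Gamma μ * Real.Gamma (1 - μ)) : ℂ) = ((∫ s in (0:ℝ)..1, f s : ℝ) : ℂ) := by
      rw [← heq, ← key]
      push_cast [← Complex.Gamma_ofReal]
      norm_num
    rw [← hrefl]
    exact_mod_cast h2.symm
  -- Step C : the integral of g over (t,1)
  set c := 1 - t with hc
  have hc0 : 0 < c := by linarith
  set g : ℝ → ℝ := fun u => (1 - u) ^ (-μ) * (u - t) ^ (μ - 1) with hg
  have hpt : ∀ s ∈ Set.Icc (0:ℝ) 1, g (c * s + t) = c⁻¹ * f s := by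
    intro s hs
    have hs0 : 0 ≤ s := hs.1
    have hs1 : 0 ≤ 1 - s := by linarith [hs.2]
    simp only [hg, hf]
    have e1 : 1 - (c * s + t) = c * (1 - s) := by ring
    have e2 : c * s + t - t = c * s := by ring
    rw [e1, e2, Real.mul_rpow hc0.le hs1, Real.mul_rpow hc0.le hs0]
    rw [show c ^ (-μ) * (1 - s) ^ (-μ) * (c ^ (μ - 1) * s ^ (μ - 1))
        = (c ^ (-μ) * c ^ (μ - 1)) * (s ^ (μ - 1) * (1 - s) ^ (-μ)) by ring,
      ← Real.rpow_add hc0, show -μ + (μ - 1) = -1 by ring, Real.rpow_neg_one]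
  have hgi : IntegrableOn g (Set.Ioo t 1) := by
    have h1 := (hfi.const_mul c⁻¹).comp_mul_left (c := c⁻¹)
    rw [show (0:ℝ) / c⁻¹ = 0 by simp, show (1:ℝ) / c⁻¹ = c by field_simp] at h1
    have h2 := h1.comp_sub_right t
    rw [show (0:ℝ) + t = t by ring, show c + t = 1 by simp [hc]] at h2
    rw [intervalIntegrable_iff_integrableOn_Ioc_of_le ht1.le] at h2
    refine (h2.congr_fun ?_ measurableSet_Ioc).mono_set Set.Ioo_subset_Ioc_self
    intro u hu
    have hs : c⁻¹ * (u - t) ∈ Set.Icc (0:ℝ) 1 := by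
      constructor
      · have : 0 ≤ u - t := by linarith [hu.1]
        positivity
      · rw [inv_mul_le_iff₀ hc0]
        simp only [hc, mul_one]
        linarith [hu.2]
    have := hpt _ hs
    rw [show c * (c⁻¹ * (u - t)) + t = u by field_simp; ring] at this
    simpa using this.symm
  have hgB : ∫ u in Set.Ioo t 1, g u = π / Real.sin (π * μ) := by
    have hIoo : ∫ u in Set.Ioo t 1, g u = ∫ u in t..1, g u := by
      rw [intervalIntegral.integral_of_le ht1.le, MeasureTheory.integral_Ioc_eq_integral_Ioo]
    rw [hIoo]
    have hsub := intervalIntegral.integral_comp_mul_add (a := 0) (b := 1) g (ne_of_gt hc0) t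
    rw [show c * 0 + t = t by ring, show c * 1 + t = 1 by ring] at hsub
    have hL : ∫ s in (0:ℝ)..1, g (c * s + t) = c⁻¹ * (π / Real.sin (π * μ)) := by
      rw [intervalIntegral.integral_congr (g := fun s => c⁻¹ * f s) ?_,
        intervalIntegral.integral_const_mul, hfB]
      intro s hs
      exact hpt s (by rwa [Set.uIcc_of_le (by norm_num : (0:ℝ) ≤ 1)] at hs)
    rw [hL, smul_eq_mul] at hsub
    exact (mul_left_cancel₀ (inv_ne_zero hc0.ne') hsub).symm
  -- Step D : main estimates
  have hsin : 0 < Real.sin (π * μ) := by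
    apply Real.sin_pos_of_pos_of_lt_pi
    · positivity
    · nlinarith [Real.pi_pos]
  have hk : 0 < Real.sin (π * μ) / π := by positivity
  have hkG : (Real.sin (π * μ) / π) * (π / Real.sin (π * μ)) = 1 := by
    field_simp
  set F : ℝ → ℝ := fun u => (1 - u) ^ (-μ) * (u - t) ^ (μ - 1) *
    Real.exp (-x ^ 2 / (2 * (u - t))) with hF
  have hgpos : ∀ u ∈ Set.Ioo t 1, 0 < g u := by
    intro u hu
    have h1u : 0 < 1 - u := by linarith [hu.2]
    have hut : 0 < u - t := by linarith [hu.1]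
    exact mul_pos (Real.rpow_pos_of_pos h1u _) (Real.rpow_pos_of_pos hut _)
  have hFnn : ∀ u ∈ Set.Ioo t 1, 0 ≤ F u := by
    intro u hu
    exact mul_nonneg (hgpos u hu).le (Real.exp_pos _).le
  have hFle : ∀ u ∈ Set.Ioo t 1, F u ≤ g u := by
    intro u hu
    have hut : 0 < u - t := by linarith [hu.1]
    have hexp : Real.exp (-x ^ 2 / (2 * (u - t))) ≤ 1 := by
      rw [Real.exp_le_one_iff]
      apply div_nonpos_of_nonpos_of_nonneg
      · simpa using sq_nonneg x
      · positivity
    calc F u = g u * Real.exp (-x ^ 2 / (2 * (u - t))) := rfl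
      _ ≤ g u * 1 := mul_le_mul_of_nonneg_left hexp (hgpos u hu).le
      _ = g u := by rw [mul_one]
  have hFcont : ContinuousOn F (Set.Ioo t 1) := by
    apply ContinuousOn.mul
    · apply ContinuousOn.mul
      · exact (continuous_const.sub continuous_id).continuousOn.rpow_const
          fun u hu => Or.inl (by intro h; simp only [Pi.sub_apply, id_eq] at h; linarith [hu.2])
      · exact (continuous_id.sub continuous_const).continuousOn.rpow_const
          fun u hu => Or.inl (by intro h; simp only [Pi.sub_apply, id_eq] at h; linarith [hu.1])
    · apply ContinuousOn.rexp
      exact continuousOn_const.div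
        ((continuous_const.mul (continuous_id.sub continuous_const)).continuousOn)
        fun u hu => by intro h; simp only [id, mul_eq_zero] at h; rcases h with h | h <;> linarith [hu.1]
  have hFi : IntegrableOn F (Set.Ioo t 1) := by
    refine MeasureTheory.Integrable.mono hgi
      (hFcont.aestronglyMeasurable measurableSet_Ioo) ?_
    rw [ae_restrict_iff' measurableSet_Ioo]
    filter_upwards with u hu
    rw [Real.norm_eq_abs, Real.norm_eq_abs, abs_of_nonneg (hFnn u hu),
      abs_of_nonneg (hgpos u hu).le]
    exact hFle u hu
  have hle : ∫ u in Set.Ioo t 1, F u ≤ ∫ u in Set.Ioo t 1, g u :=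
    setIntegral_mono_on hFi hgi measurableSet_Ioo hFle
  constructor
  · calc (Real.sin (π * μ) / π) * ∫ u in Set.Ioo t 1, F u
        ≤ (Real.sin (π * μ) / π) * ∫ u in Set.Ioo t 1, g u :=
          mul_le_mul_of_nonneg_left hle hk.le
      _ = 1 := by rw [hgB, hkG]
  · constructor
    · intro heq
      by_contra hxne
      have hxpos : 0 < x := lt_of_le_of_ne hx (Ne.symm hxne)
      -- strict inequality
      set h : ℝ → ℝ := fun u => g u - F u with hh
      have hhi : IntegrableOn h (Set.Ioo t 1) := hgi.sub hFi
      have hhpos : ∀ u ∈ Set.Ioo t 1, 0 < h u := by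
        intro u hu
        have hut : 0 < u - t := by linarith [hu.1]
        have hexp : Real.exp (-x ^ 2 / (2 * (u - t))) < 1 := by
          rw [Real.exp_lt_one_iff]
          apply div_neg_of_neg_of_pos
          · simp only [neg_neg, Left.neg_neg_iff]
            positivity
          · positivity
        have : F u < g u * 1 := by
          have := mul_lt_mul_of_pos_left hexp (hgpos u hu)
          simpa [hF, hg, mul_comm, mul_assoc] using this
        simp only [hh]
        rw [mul_one] at this
        linarith
      have hpos : 0 < ∫ u in Set.Ioo t 1, h u := by
        rw [setIntegral_pos_iff_support_of_nonneg_ae ?_ hhi]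
        · have hsub : Set.Ioo t 1 ⊆ Function.support h ∩ Set.Ioo t 1 :=
            fun u hu => ⟨ne_of_gt (hhpos u hu), hu⟩
          refine lt_of_lt_of_le ?_ (measure_mono hsub)
          rw [Real.volume_Ioo]
          exact ENNReal.ofReal_pos.mpr (by linarith)
        · refine (ae_restrict_iff' measurableSet_Ioo).mpr ?_
          filter_upwards with u hu
          exact (hhpos u hu).le
      have hsubint : ∫ u in Set.Ioo t 1, h u
          = (∫ u in Set.Ioo t 1, g u) - ∫ u in Set.Ioo t 1, F u :=
        integral_sub hgi hFi
      have hlt : ∫ u in Set.Ioo t 1, F u < ∫ u in Set.Ioo t 1, g u := by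
        rw [hsubint] at hpos; linarith
      have : (Real.sin (π * μ) / π) * ∫ u in Set.Ioo t 1, F u < 1 := by
        calc (Real.sin (π * μ) / π) * ∫ u in Set.Ioo t 1, F u
            < (Real.sin (π * μ) / π) * ∫ u in Set.Ioo t 1, g u :=
              mul_lt_mul_of_pos_left hlt hk
          _ = 1 := by rw [hgB, hkG]
      linarith [heq.ge, this]
    · intro hx0
      subst hx0
      have : ∫ u in Set.Ioo t 1, F u = ∫ u in Set.Ioo t 1, g u := by
        refine setIntegral_congr_fun measurableSet_Ioo fun u hu => ?_
        simp [hF, hg]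
      rw [this, hgB, hkG]
end
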